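/- For every natural number n, ⌊T_n/3⌋ can be written as a sum of three triangular numbers, each of which is either T_{⌊n/3⌋} or T_{⌊n/3⌋+1} or T_{⌊n/3⌋-1}. -/
import Mathlib


def T (k : ℕ) : ℕ := k * (k + 1) / 2

lemma twoT (k : ℕ) : 2 * T k = k * (k + 1) := by
  unfold T
  exact Nat.mul_div_cancel' (Nat.even_mul_succ_self k).two_dvd

theorem stmt6 (n : ℕ) : ∃ a b c : ℕ,
    (a = n / 3 ∨ a = n / 3 + 1 ∨ a = n / 3 - 1) ∧
    (b = n / 3 ∨ b = n / 3 + 1 ∨ b = n / 3 - 1) ∧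
    (c = n / 3 ∨ c = n / 3 + 1 ∨ c = n / 3 - 1) ∧
    T n / 3 = T a + T b + T c := by
  set m := n / 3 with hm
  clear_value m
  have hmod := Nat.div_add_mod n 3
  have hr : n % 3 = 0 ∨ n % 3 = 1 ∨ n % 3 = 2 := by omega
  rcases hr with hr | hr | hr
  · -- n = 3m
    have hn : n = 3 * m := by omega
    refine ⟨m, m, m - 1, Or.inl rfl, Or.inl rfl, Or.inr (Or.inr rfl), ?_⟩
    rcases Nat.eq_zero_or_pos m with h0 | hpos
    · subst h0; simp [hn, T]
    · obtain ⟨k, rfl⟩ : ∃ k, m = k + 1 := ⟨m - 1, by omega⟩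
      have e1 := twoT n
      have e2 := twoT (k + 1)
      have e3 := twoT k
      have key : 2 * T n = 6 * (2 * T (k + 1)) + 3 * (2 * T k) := by
        rw [e1, e2, e3, hn]; ring
      simp only [Nat.add_sub_cancel]
      omega
  · -- n = 3m + 1
    have hn : n = 3 * m + 1 := by omega
    refine ⟨m, m, m, Or.inl rfl, Or.inl rfl, Or.inl rfl, ?_⟩
    have e1 := twoT n
    have e2 := twoT m
    have key : 2 * T n = 9 * (2 * T m) + 2 := by
      rw [e1, e2, hn]; ring
    omega
  · -- n = 3m + 2
    have hn : n = 3 * m + 2 := by omega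
    refine ⟨m + 1, m, m, Or.inr (Or.inl rfl), Or.inl rfl, Or.inl rfl, ?_⟩
    have e1 := twoT n
    have e2 := twoT (m + 1)
    have e3 := twoT m
    have key : 2 * T n = 3 * (2 * T (m + 1)) + 6 * (2 * T m) := by
      rw [e1, e2, e3, hn]; ring
    omega
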